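/- Let K be a field of characteristic 2 with a Tits endomorphism θ and let ν be a θ-invariant valuation of K. Then for all s, t ∈ K, ν(R(s,t)) = min{ (√2+2)·ν(s), √2·ν(t) }, with the conventions ν(0) = ∞ and c·∞ = ∞ for c > 0. -/

import Mathlib

/-- Multiplication of an extended real (in `WithTop ℝ`) by a real scalar,
with the convention `c · ∞ = ∞`. -/
noncomputable def smulTop (c : ℝ) (x : WithTop ℝ) : WithTop ℝ :=
  WithTop.map (fun y => c * y) x

/-- The norm `R(s,t) = s^{θ+2} + st + θ(t)` of the group `S = K × K`. -/
def Rnorm {K : Type*} [Field K] (θ : K →+* K) (s t : K) : K :=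
  θ s * s ^ 2 + s * t + θ t

/-!
Write `q = √2`. The three summands `θ(s)s², st, θ(t)` of `R(s,t)` have valuations
`(q+2)ν(s)`, `ν(s)+ν(t)` and `qν(t)`. Since `q+2 = q(q+1)` and `(q-1)(q+1) = 1`, unless
`ν(t) = (q+1)ν(s)` one of the two outer valuations is strictly smaller than the other two
terms, and the ultrametric inequality gives the claim.

In the balanced case `ν(t) = (q+1)ν(s)` all three valuations equal `m = (q+2)ν(s)`, and
`ν(R) ≥ m`. If `ν(R) > m`, compare valuations on both sides of the identity
`s·(θ(R) + θ(s)R) = t·(θ(t) + R)`, valid in characteristic 2 for a Tits endomorphism: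
the right side has valuation `(q+1)ν(s) + m`, the left side strictly more.
-/

theorem smulTop_coe (c x : ℝ) : smulTop c x = ((c * x : ℝ) : WithTop ℝ) := rfl

theorem smulTop_top (c : ℝ) : smulTop c ⊤ = ⊤ := rfl

theorem smulTop_add_nsmul (c : ℝ) (n : ℕ) (x : WithTop ℝ) :
    smulTop c x + n • x = smulTop (c + n) x := by
  induction x with
  | top => cases n <;> simp [smulTop_top]
  | coe x => simp only [smulTop_coe, ← WithTop.coe_nsmul, ← WithTop.coe_add, nsmul_eq_mul]; ring_nf

theorem smulTop_strictMono {c : ℝ} (hc : 0 < c) : StrictMono (smulTop c) :=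
  WithTop.strictMono_map_iff.mpr (strictMono_mul_left_of_pos hc)

theorem sqrt_two_add_two_mul_lt_add {a b : ℝ} (h : (√2 + 2) * a < √2 * b) :
    (√2 + 2) * a < a + b := by
  have hq2 : √2 * √2 = 2 := Real.mul_self_sqrt zero_le_two
  have : √2 * ((√2 + 1) * a) < √2 * b := by linear_combination h + a * hq2
  have := lt_of_mul_lt_mul_left this (Real.sqrt_nonneg 2)
  linarith

theorem sqrt_two_mul_lt_add {a b : ℝ} (h : √2 * b < (√2 + 2) * a) : √2 * b < a + b := by
  have hq2 : √2 * √2 = 2 := Real.mul_self_sqrt zero_le_two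
  have hq1 : 1 < √2 := by rw [Real.lt_sqrt] <;> norm_num
  have : √2 * b < √2 * ((√2 + 1) * a) := by linear_combination h - a * hq2
  have := lt_of_mul_lt_mul_left this (Real.sqrt_nonneg 2)
  have : (√2 - 1) * b < (√2 - 1) * ((√2 + 1) * a) := mul_lt_mul_of_pos_left this (by linarith)
  linear_combination this + a * hq2

theorem eq_sqrt_two_add_one_mul_of_eq {a b : ℝ} (h : (√2 + 2) * a = √2 * b) :
    b = (√2 + 1) * a := by
  have hq2 : √2 * √2 = 2 := Real.mul_self_sqrt zero_le_two
  refine mul_left_cancel₀ (Real.sqrt_pos.2 two_pos).ne' ?_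
  linear_combination -h - a * hq2

section Rnorm

variable {K : Type*} [Field K] (θ : K →+* K)

theorem Rnorm_zero_left (t : K) : Rnorm θ 0 t = θ t := by
  simp [Rnorm]

theorem Rnorm_zero_right (s : K) : Rnorm θ s 0 = θ s * s ^ 2 := by
  simp [Rnorm]

theorem mul_map_Rnorm_add_eq [CharP K 2] (hθ : ∀ x : K, θ (θ x) = x ^ 2) (s t : K) :
    s * (θ (Rnorm θ s t) + θ s * Rnorm θ s t) = t * (θ t + Rnorm θ s t) := by
  have h2 : (2 : K) = 0 := CharTwo.two_eq_zero
  simp only [Rnorm, map_add, map_mul, map_pow, hθ]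
  linear_combination (s ^ 3 * θ s ^ 2 + s * θ s * θ t - t * θ t) * h2

end Rnorm

namespace AddValuation

section Ultrametric

variable {R Γ₀ : Type*} [Ring R] [LinearOrderedAddCommMonoidWithTop Γ₀] (v : AddValuation R Γ₀)
  {x y z : R}

theorem map_add_add_eq_of_lt_left (hy : v x < v y) (hz : v x < v z) : v (x + y + z) = v x := by
  rw [add_assoc, v.map_add_eq_of_lt_left ((lt_min hy hz).trans_le (v.map_add y z))]

theorem map_add_add_eq_of_lt_right (hx : v z < v x) (hy : v z < v y) :
    v (x + y + z) = v z :=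
  v.map_add_eq_of_lt_right ((lt_min hx hy).trans_le (v.map_add x y))

end Ultrametric

variable {K : Type*} [Field K] {θ : K →+* K} (v : AddValuation K (WithTop ℝ))

theorem map_map_mul_sq (hv : ∀ x : K, v (θ x) = smulTop √2 (v x)) (s : K) :
    v (θ s * s ^ 2) = smulTop (√2 + 2) (v s) := by
  rw [v.map_mul, v.map_pow, hv, smulTop_add_nsmul, Nat.cast_ofNat]

theorem map_Rnorm_le_of_balanced [CharP K 2] (hθ : ∀ x : K, θ (θ x) = x ^ 2)
    (hv : ∀ x : K, v (θ x) = smulTop √2 (v x)) {s t : K} {a : ℝ} (hs : v s = a)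
    (ht : v t = ((√2 + 1) * a : ℝ)) : v (Rnorm θ s t) ≤ ((√2 + 2) * a : ℝ) := by
  have hq2 : √2 * √2 = 2 := Real.mul_self_sqrt zero_le_two
  have hq : 0 < √2 := Real.sqrt_pos.2 two_pos
  set m := (√2 + 2) * a with hm
  by_contra! hR
  have hθt : v (θ t) = m := by
    rw [hv, ht, smulTop_coe, WithTop.coe_eq_coe]
    linear_combination a * hq2
  have hθR : (((2 * √2 + 2) * a : ℝ) : WithTop ℝ) < v (θ (Rnorm θ s t)) := by
    rw [hv, show (2 * √2 + 2) * a = √2 * m by linear_combination -a * hq2, ← smulTop_coe]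
    exact smulTop_strictMono hq hR
  have hθsR : (((2 * √2 + 2) * a : ℝ) : WithTop ℝ) < v (θ s * Rnorm θ s t) := by
    rw [v.map_mul, hv, hs, smulTop_coe, show (2 * √2 + 2) * a = √2 * a + m by ring,
      WithTop.coe_add]
    exact WithTop.add_lt_add_left WithTop.coe_ne_top hR
  have hright : v (t * (θ t + Rnorm θ s t)) = ((2 * √2 + 3) * a : ℝ) := by
    rw [v.map_mul, v.map_add_eq_of_lt_left (hθt ▸ hR), ht, hθt, ← WithTop.coe_add, hm]
    ring_nf
  have hleft : (((2 * √2 + 3) * a : ℝ) : WithTop ℝ)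
      < v (s * (θ (Rnorm θ s t) + θ s * Rnorm θ s t)) := by
    rw [v.map_mul, hs, show (2 * √2 + 3) * a = a + (2 * √2 + 2) * a by ring, WithTop.coe_add]
    exact WithTop.add_lt_add_left WithTop.coe_ne_top
      ((lt_min hθR hθsR).trans_le (v.map_add _ _))
  rw [mul_map_Rnorm_add_eq θ hθ, hright] at hleft
  exact hleft.false

theorem map_Rnorm [CharP K 2] (hθ : ∀ x : K, θ (θ x) = x ^ 2)
    (hv : ∀ x : K, v (θ x) = smulTop √2 (v x)) (s t : K) :
    v (Rnorm θ s t) = min (smulTop (√2 + 2) (v s)) (smulTop √2 (v t)) := by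
  rcases eq_or_ne s 0 with rfl | hs
  · simp [Rnorm_zero_left, hv, smulTop_top]
  rcases eq_or_ne t 0 with rfl | ht
  · simp [Rnorm_zero_right, v.map_map_mul_sq hv, smulTop_top]
  obtain ⟨a, ha⟩ := WithTop.ne_top_iff_exists.mp (v.ne_top_iff.mpr hs)
  obtain ⟨b, hb⟩ := WithTop.ne_top_iff_exists.mp (v.ne_top_iff.mpr ht)
  have hA : v (θ s * s ^ 2) = ((√2 + 2) * a : ℝ) := by
    rw [v.map_map_mul_sq hv, ← ha, smulTop_coe]
  have hB : v (s * t) = (a + b : ℝ) := by rw [v.map_mul, ← ha, ← hb, WithTop.coe_add]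
  have hC : v (θ t) = (√2 * b : ℝ) := by rw [hv, ← hb, smulTop_coe]
  rw [← ha, ← hb, smulTop_coe, smulTop_coe, ← WithTop.coe_min]
  rcases lt_trichotomy ((√2 + 2) * a) (√2 * b) with hlt | heq | hgt
  · rw [min_eq_left hlt.le, ← hA]
    refine v.map_add_add_eq_of_lt_left ?_ ?_
    · rw [hA, hB]; exact_mod_cast sqrt_two_add_two_mul_lt_add hlt
    · rw [hA, hC]; exact_mod_cast hlt
  · rw [← heq, min_self]
    refine le_antisymm (v.map_Rnorm_le_of_balanced hθ hv ha.symm ?_) ?_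
    · rw [← hb, eq_sqrt_two_add_one_mul_of_eq heq]
    refine v.map_le_add (v.map_le_add hA.ge ?_) (heq ▸ hC.ge)
    rw [hB, eq_sqrt_two_add_one_mul_of_eq heq, WithTop.coe_le_coe]
    linarith
  · rw [min_eq_right hgt.le, ← hC]
    refine v.map_add_add_eq_of_lt_right ?_ ?_
    · rw [hA, hC]; exact_mod_cast hgt
    · rw [hB, hC]; exact_mod_cast sqrt_two_mul_lt_add hgt

end AddValuation

theorem stmt_18_general {K : Type*} [Field K] [CharP K 2]
    (θ : K →+* K) (hθ : ∀ x : K, θ (θ x) = x ^ 2)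
    (ν : K → WithTop ℝ)
    (hν0 : ∀ x : K, ν x = ⊤ ↔ x = 0)
    (hmul : ∀ x y : K, ν (x * y) = ν x + ν y)
    (hadd : ∀ x y : K, min (ν x) (ν y) ≤ ν (x + y))
    (hinv : ∀ x : K, x ≠ 0 → ν (θ x) = smulTop (Real.sqrt 2) (ν x))
    (s t : K) :
    ν (Rnorm θ s t)
      = min (smulTop (Real.sqrt 2 + 2) (ν s)) (smulTop (Real.sqrt 2) (ν t)) := by
  have hν1 : ν 1 = 0 := by
    obtain ⟨c, hc⟩ := WithTop.ne_top_iff_exists.mp ((hν0 1).not.mpr one_ne_zero)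
    have h := hmul 1 1
    rw [mul_one, ← hc, ← WithTop.coe_add, WithTop.coe_eq_coe] at h
    rw [← hc, WithTop.coe_eq_zero]
    linarith
  let v : AddValuation K (WithTop ℝ) := AddValuation.of ν ((hν0 0).2 rfl) hν1 hadd hmul
  have hv : ∀ x : K, v (θ x) = smulTop √2 (v x) := by
    intro x
    rcases eq_or_ne x 0 with rfl | hx
    · simp [smulTop_top]
    · exact hinv x hx
  exact v.map_Rnorm hθ hv s t

/-- Let `K` be a field of characteristic 2 with a Tits endomorphism `θ` and `ν`
a `θ`-invariant valuation of `K`. Then for all `s, t ∈ K`,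
`ν(R(s,t)) = min{(√2+2)·ν(s), √2·ν(t)}` (conventions `ν(0) = ∞` and `c·∞ = ∞`
for `c > 0`). -/
theorem stmt_18 {K : Type*} [Field K] [CharP K 2]
    (θ : K →+* K) (hθ : ∀ x : K, θ (θ x) = x ^ 2)
    (ν : K → WithTop ℝ)
    (hν0 : ∀ x : K, ν x = ⊤ ↔ x = 0)
    (hmul : ∀ x y : K, ν (x * y) = ν x + ν y)
    (hadd : ∀ x y : K, min (ν x) (ν y) ≤ ν (x + y))
    (hnt : ∃ x : K, x ≠ 0 ∧ ν x ≠ 0)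
    (hinv : ∀ x : K, x ≠ 0 → ν (θ x) = smulTop (Real.sqrt 2) (ν x))
    (s t : K) :
    ν (Rnorm θ s t)
      = min (smulTop (Real.sqrt 2 + 2) (ν s)) (smulTop (Real.sqrt 2) (ν t)) :=
  stmt_18_general θ hθ ν hν0 hmul hadd hinv s t
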